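/- (Jacobian predicate, d = 2.) Let A, M be binary forms of degrees 2 and 2. There exists a binary quadratic B with (A,B)₁ = M if and only if (A,M)₂ = 0. -/

import Mathlib

open MvPolynomial

/-- Iterated partial derivative `∂^k/∂xᵢ^k`. -/
noncomputable def pd (i : Fin 2) (k : ℕ) (P : MvPolynomial (Fin 2) ℂ) :
    MvPolynomial (Fin 2) ℂ :=
  (⇑(pderiv i))^[k] P

/-- The r-th transvectant of binary forms `E` (of order `e`) and `F` (of order `f`):
`(E,F)_r = ((e−r)!(f−r)!/(e!f!)) Σᵢ (−1)^i C(r,i) ∂^r E/∂x0^{r−i}∂x1^i · ∂^r F/∂x0^i ∂x1^{r−i}`. -/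
noncomputable def transv (e f r : ℕ) (E F : MvPolynomial (Fin 2) ℂ) :
    MvPolynomial (Fin 2) ℂ :=
  C ((((e - r).factorial * (f - r).factorial : ℕ) : ℂ) /
      (((e.factorial * f.factorial : ℕ)) : ℂ)) *
    ∑ i ∈ Finset.range (r + 1),
      C ((-1 : ℂ) ^ i * (r.choose i : ℂ)) *
        (pd 0 (r - i) (pd 1 i E)) * (pd 1 (r - i) (pd 0 i F))

/-- The binary quadratic form with coefficients `a`, `b`, `c`. -/
noncomputable def Q (a b c : ℂ) : MvPolynomial (Fin 2) ℂ :=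
  C a * X 0 ^ 2 + C b * (X 0 * X 1) + C c * X 1 ^ 2

lemma Q_hom (a b c : ℂ) : (Q a b c).IsHomogeneous 2 := by
  have h0 : (X 0 : MvPolynomial (Fin 2) ℂ).IsHomogeneous 1 := isHomogeneous_X _ _
  have h1 : (X 1 : MvPolynomial (Fin 2) ℂ).IsHomogeneous 1 := isHomogeneous_X _ _
  have t1 : (C a * X 0 ^ 2 : MvPolynomial (Fin 2) ℂ).IsHomogeneous 2 := by
    simpa using (isHomogeneous_C _ a).mul (h0.pow 2)
  have t2 : (C b * (X 0 * X 1) : MvPolynomial (Fin 2) ℂ).IsHomogeneous 2 := by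
    simpa using (isHomogeneous_C _ b).mul (h0.mul h1)
  have t3 : (C c * X 1 ^ 2 : MvPolynomial (Fin 2) ℂ).IsHomogeneous 2 := by
    simpa using (isHomogeneous_C _ c).mul (h1.pow 2)
  exact (t1.add t2).add t3

/-- Every homogeneous binary quadratic is of the form `Q a b c`. -/
lemma decomp (P : MvPolynomial (Fin 2) ℂ) (hP : P.IsHomogeneous 2) :
    P = Q (coeff (Finsupp.single 0 2) P)
          (coeff (Finsupp.single 0 1 + Finsupp.single 1 1) P)
          (coeff (Finsupp.single 1 2) P) := by
  unfold Q
  have key : ∀ d : Fin 2 →₀ ℕ, d.degree = d 0 + d 1 := by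
    intro d
    rw [Finsupp.degree_apply, Finset.sum_subset (Finset.subset_univ _)
      (fun x _ hx => Finsupp.notMem_support_iff.mp hx), Fin.sum_univ_two]
  have hd2 : ∀ d : Fin 2 →₀ ℕ, d = Finsupp.single 0 (d 0) + Finsupp.single 1 (d 1) := by
    intro d; ext x; fin_cases x <;> simp [Finsupp.single_apply]
  ext d
  simp only [coeff_add, coeff_C_mul]
  have hx01 : (X 0 * X 1 : MvPolynomial (Fin 2) ℂ) =
      monomial (Finsupp.single 0 1 + Finsupp.single 1 1) 1 := by
    rw [← pow_one (X 0), ← pow_one (X 1), X_pow_eq_monomial, X_pow_eq_monomial,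
      monomial_mul, mul_one]
  rw [X_pow_eq_monomial, X_pow_eq_monomial, hx01,
    coeff_monomial, coeff_monomial, coeff_monomial]
  by_cases hd : d 0 + d 1 = 2
  · have h0 : d 0 = 0 ∧ d 1 = 2 ∨ d 0 = 1 ∧ d 1 = 1 ∨ d 0 = 2 ∧ d 1 = 0 := by omega
    have hrw := hd2 d
    rcases h0 with ⟨h0, h1⟩ | ⟨h0, h1⟩ | ⟨h0, h1⟩ <;> rw [h0, h1] at hrw <;>
      rw [hrw] <;>
      norm_num [Finsupp.single_add, DFunLike.ext_iff, Finsupp.single_apply, Fin.forall_fin_two]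
  · rw [hP.coeff_eq_zero (by rw [key]; exact hd)]
    have n1 : ¬ (Finsupp.single 0 2 : Fin 2 →₀ ℕ) = d := by
      intro h; rw [← h] at hd; simp [key, Finsupp.single_apply] at hd
    have n2 : ¬ (Finsupp.single 0 1 + Finsupp.single 1 1 : Fin 2 →₀ ℕ) = d := by
      intro h; rw [← h] at hd; simp [key, Finsupp.single_apply] at hd
    have n3 : ¬ (Finsupp.single 1 2 : Fin 2 →₀ ℕ) = d := by
      intro h; rw [← h] at hd; simp [key, Finsupp.single_apply] at hd
    simp [n1, n2, n3]

@[simp] lemma pderiv_two (i : Fin 2) :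
    (pderiv i) (2 : MvPolynomial (Fin 2) ℂ) = 0 := by
  rw [show (2 : MvPolynomial (Fin 2) ℂ) = C 2 from (map_ofNat C 2).symm, pderiv_C]

lemma tv1 (a b c u v w : ℂ) :
    transv 2 2 1 (Q a b c) (Q u v w) =
      Q ((a*v - b*u)/2) (a*w - c*u) ((b*w - c*v)/2) := by
  apply MvPolynomial.funext
  intro x
  simp [transv, pd, Q, Finset.sum_range_succ, pderiv_X, Pi.single_apply]
  ring

lemma tv2 (a b c m n p : ℂ) :
    transv 2 2 2 (Q a b c) (Q m n p) = C (a*p - b*n/2 + c*m) := by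
  apply MvPolynomial.funext
  intro x
  simp [transv, pd, Q, Finset.sum_range_succ, pderiv_X, Pi.single_apply]
  ring

/-- Jacobian predicate, d = 2: for binary quadratics A ≠ 0 and M,
there exists a quadratic B with `(A,B)₁ = M` iff `(A,M)₂ = 0`. -/
theorem jacobian_predicate_deg_two (A M : MvPolynomial (Fin 2) ℂ)
    (hA : A.IsHomogeneous 2) (hA0 : A ≠ 0) (hM : M.IsHomogeneous 2) :
    (∃ B : MvPolynomial (Fin 2) ℂ, B.IsHomogeneous 2 ∧ transv 2 2 1 A B = M) ↔
      transv 2 2 2 A M = 0 := by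
  set a := coeff (Finsupp.single 0 2) A
  set b := coeff (Finsupp.single 0 1 + Finsupp.single 1 1) A
  set c := coeff (Finsupp.single 1 2) A
  set m := coeff (Finsupp.single 0 2) M
  set n := coeff (Finsupp.single 0 1 + Finsupp.single 1 1) M
  set p := coeff (Finsupp.single 1 2) M
  have hAq : A = Q a b c := decomp A hA
  have hMq : M = Q m n p := decomp M hM
  constructor
  · rintro ⟨B, hB2, hBe⟩
    obtain ⟨u, v, w, hBq⟩ : ∃ u v w, B = Q u v w :=
      ⟨_, _, _, decomp B hB2⟩
    rw [hAq, ← hBe, hBq, hAq, tv1, tv2,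
      show a*((b*w - c*v)/2) - b*(a*w - c*u)/2 + c*((a*v - b*u)/2) = 0 by ring, map_zero]
  · intro h
    rw [hAq, hMq, tv2] at h
    have hs : a*p - b*n/2 + c*m = 0 := by
      have := MvPolynomial.C_injective (Fin 2) ℂ
      exact this (by simpa using h)
    by_cases ha : a ≠ 0
    · refine ⟨Q 0 (2*m/a) (n/a), Q_hom _ _ _, ?_⟩
      rw [hAq, hMq, tv1]
      have e1 : (a*(2*m/a) - b*0)/2 = m := by field_simp; ring
      have e2 : a*(n/a) - c*0 = n := by field_simp; ring
      have e3 : (b*(n/a) - c*(2*m/a))/2 = p := by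
        field_simp
        linear_combination (-2) * hs
      rw [e1, e2, e3]
    · push_neg at ha
      by_cases hc : c ≠ 0
      · refine ⟨Q (-(n/c)) (-(2*p/c)) 0, Q_hom _ _ _, ?_⟩
        rw [hAq, hMq, tv1]
        have e1 : (a*(-(2*p/c)) - b*(-(n/c)))/2 = m := by
          rw [ha]; field_simp; linear_combination (-2) * hs + 2*p*ha
        have e2 : a*0 - c*(-(n/c)) = n := by field_simp; ring
        have e3 : (b*0 - c*(-(2*p/c)))/2 = p := by field_simp; ring
        rw [e1, e2, e3]
      · push_neg at hc
        have hb : b ≠ 0 := by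
          intro hb
          apply hA0
          rw [hAq, ha, hb, hc]
          simp [Q]
        have hn : n = 0 := by
          have h2 : b * n = 0 := by linear_combination (-2) * hs + 2*p*ha + 2*m*hc
          exact (mul_eq_zero.mp h2).resolve_left hb
        refine ⟨Q (-(2*m/b)) 0 (2*p/b), Q_hom _ _ _, ?_⟩
        rw [hAq, hMq, tv1]
        have e1 : (a*0 - b*(-(2*m/b)))/2 = m := by rw [ha]; field_simp; ring
        have e2 : a*(2*p/b) - c*(-(2*m/b)) = n := by rw [ha, hc, hn]; ring
        have e3 : (b*(2*p/b) - c*0)/2 = p := by rw [hc]; field_simp; ring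
        rw [e1, e2, e3]
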